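/- arXiv:2104.09860 — 3 statements merged into one kernel-verified Lean document; each statement's English description precedes it below -/
import Mathlib

section
/- Let X = {0,2}^ℤ and Y = {0,1,2}^ℤ be full shifts. There exists a continuous shift-commuting map f' : X' → Y' that is not the restriction of any continuous shift-commuting map f : X → Y. -/
/-!
Let the parity code `c x` keep every `2` of `x` and replace every other symbol by the parity
of the distance to the nearest `2`. On points containing a `2` the value `c x i` only depends
on `x` near `i`, so `c` is continuous there; it commutes with the shift and is injective on
`{0,2}^ℤ`, so it maps aperiodic points to aperiodic points, and every aperiodic point of
`{0,2}^ℤ` contains a `2`. A continuous extension to all of `{0,2}^ℤ` is impossible at the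
all-zero point: the points with a single `2` at position `n` converge to it, while their
codes at `0` alternate between `0` and `1` with the parity of `n`.
-/

open Set

/-- The two-sided shift map on `A^ℤ`: `(tshift x) i = x (i+1)`. -/
def tshift {A : Type*} (x : ℤ → A) : ℤ → A := fun i => x (i + 1)

/-- A two-sided point is periodic if `σ^n x = x` for some `n ≥ 1`. -/
def TPeriodic {A : Type*} (x : ℤ → A) : Prop := ∃ n : ℕ, 1 ≤ n ∧ tshift^[n] x = x

/-- `Aper X` is the set `X'` of aperiodic points of `X`. -/
def Aper {A : Type*} (X : Set (ℤ → A)) : Set (ℤ → A) := {x ∈ X | ¬ TPeriodic x}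

/-- The word `w` occurs in `x` at position `i`. -/
def OccursAt {A : Type*} (w : List A) (x : ℤ → A) (i : ℤ) : Prop :=
  ∀ j : Fin w.length, x (i + (j : ℕ)) = w.get j

/-- The word `w` occurs somewhere in `x`. -/
def OccursIn {A : Type*} (w : List A) (x : ℤ → A) : Prop := ∃ i : ℤ, OccursAt w x i

/-- The word `w` occurs in some point of `X`. -/
def WordIn {A : Type*} (w : List A) (X : Set (ℤ → A)) : Prop := ∃ x ∈ X, OccursIn w x

/-- `X` is a (two-sided) subshift: a closed shift-invariant subset of the full shift. -/
def IsSubshift {A : Type*} [TopologicalSpace A] (X : Set (ℤ → A)) : Prop :=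
  IsClosed X ∧ tshift '' X = X

/-- `X` is an SFT: it is defined by forbidding a finite set of finite words. -/
def IsSFT {A : Type*} (X : Set (ℤ → A)) : Prop :=
  ∃ F : Set (List A), F.Finite ∧ X = {x | ∀ w ∈ F, ¬ OccursIn w x}

/-- `X` is transitive: any two words of its language can be joined by a connecting word. -/
def IsTransitiveShift {A : Type*} (X : Set (ℤ → A)) : Prop :=
  ∀ u v : List A, WordIn u X → WordIn v X → ∃ w : List A, WordIn (u ++ w ++ v) X

/-- A map between subsets of full shifts is shift-commuting (wherever the shift stays
in the domain set, which is always the case for shift-invariant sets). -/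
def ShiftCommuting2 {A B : Type*} {X : Set (ℤ → A)} {Y : Set (ℤ → B)} (f : X → Y) : Prop :=
  ∀ (x : X) (hx : tshift (x : ℤ → A) ∈ X),
    (f ⟨tshift (x : ℤ → A), hx⟩ : ℤ → B) = tshift (f x : ℤ → B)

/-- `φ : X → Y` restricts (in domain and codomain) to `φ' : X' → Y'`. -/
def RestrictsTo2 {A B : Type*} {X : Set (ℤ → A)} {Y : Set (ℤ → B)}
    (φ : X → Y) (φ' : Aper X → Aper Y) : Prop :=
  ∀ (x : ℤ → A) (hx : x ∈ Aper X), (φ ⟨x, hx.1⟩ : ℤ → B) = (φ' ⟨x, hx⟩ : ℤ → B)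

open Filter Topology

section Shift

variable {A : Type*}

lemma tshift_iterate_apply (x : ℤ → A) (n : ℕ) (i : ℤ) : tshift^[n] x i = x (i + n) := by
  induction n generalizing x with
  | zero => simp
  | succ n ih =>
    rw [Function.iterate_succ_apply, ih]
    simp only [tshift]
    congr 1
    push_cast
    ring

lemma tperiodic_const (a : A) : TPeriodic (fun _ : ℤ => a) := ⟨1, le_rfl, rfl⟩

lemma not_tperiodic_single [Zero A] {b : A} (hb : b ≠ 0) (j : ℤ) :
    ¬ TPeriodic (Pi.single j b : ℤ → A) := by
  rintro ⟨n, hn, hper⟩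
  have h := congrFun hper j
  rw [tshift_iterate_apply, Pi.single_eq_same, Pi.single_eq_of_ne (by omega)] at h
  exact hb h.symm

lemma tendsto_single_atTop_zero [Zero A] [TopologicalSpace A] (b : A) :
    Tendsto (fun n : ℕ => (Pi.single (n : ℤ) b : ℤ → A)) atTop (𝓝 0) := by
  refine tendsto_pi_nhds.2 fun i => tendsto_nhds_of_eventually_eq ?_
  filter_upwards [eventually_gt_atTop i.toNat] with n hn
  exact Pi.single_eq_of_ne (M := fun _ => A) (show i ≠ (n : ℤ) by omega) b

end Shift

section NearestDist

variable {A : Type*} (a : A)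

-- `sInf ∅ = 0`: this is `0` when `a` does not occur in `x`.
noncomputable def nearestDist (x : ℤ → A) (i : ℤ) : ℕ :=
  sInf {n : ℕ | x (i + n) = a ∨ x (i - n) = a}

variable {a}

lemma nearestDist_le {x : ℤ → A} {i : ℤ} {n : ℕ} (h : x (i + n) = a ∨ x (i - n) = a) :
    nearestDist a x i ≤ n :=
  Nat.sInf_le h

lemma nearestDist_spec {x : ℤ → A} (hx : ∃ j, x j = a) (i : ℤ) :
    x (i + nearestDist a x i) = a ∨ x (i - nearestDist a x i) = a := by
  obtain ⟨j, hj⟩ := hx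
  refine Nat.sInf_mem (s := {n : ℕ | x (i + n) = a ∨ x (i - n) = a}) ⟨(j - i).natAbs, ?_⟩
  rcases le_total i j with hij | hji
  · left; rwa [show i + ((j - i).natAbs : ℤ) = j by omega]
  · right; rwa [show i - ((j - i).natAbs : ℤ) = j by omega]

lemma nearestDist_tshift (x : ℤ → A) (i : ℤ) :
    nearestDist a (tshift x) i = nearestDist a x (i + 1) := by
  simp only [nearestDist, tshift, add_right_comm, sub_add_eq_add_sub]

lemma nearestDist_eq_of_eqOn {x y : ℤ → A} (hx : ∃ j, x j = a) {i : ℤ}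
    (hxy : ∀ k ≤ nearestDist a x i, y (i + k) = x (i + k) ∧ y (i - k) = x (i - k)) :
    nearestDist a y i = nearestDist a x i := by
  have hy : nearestDist a y i ≤ nearestDist a x i := by
    apply nearestDist_le
    rw [(hxy _ le_rfl).1, (hxy _ le_rfl).2]
    exact nearestDist_spec hx i
  refine le_antisymm hy (nearestDist_le ?_)
  rw [← (hxy _ hy).1, ← (hxy _ hy).2]
  refine nearestDist_spec ?_ i
  rcases nearestDist_spec hx i with h | h
  · exact ⟨_, (hxy _ le_rfl).1.trans h⟩
  · exact ⟨_, (hxy _ le_rfl).2.trans h⟩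

lemma nearestDist_single [Zero A] {b : A} (hb : b ≠ 0) (j i : ℤ) :
    nearestDist b (Pi.single j b) i = (j - i).natAbs := by
  have hsingle : ∀ k, (Pi.single j b : ℤ → A) k = b ↔ k = j := fun k => by
    rw [Pi.single_apply]
    split_ifs with h <;> simp [h, hb.symm]
  have h := nearestDist_spec ⟨j, Pi.single_eq_same (M := fun _ => A) j b⟩ i
  rw [hsingle, hsingle] at h
  omega

end NearestDist

lemma not_tendsto_of_eventually_eq_ite {B : Type*} [TopologicalSpace B] [DiscreteTopology B]
    {b₀ b₁ c : B} (hb : b₀ ≠ b₁) {u : ℕ → B}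
    (hu : ∀ᶠ n in atTop, u n = if Even n then b₀ else b₁) : ¬ Tendsto u atTop (𝓝 c) := by
  rw [nhds_discrete, tendsto_pure]
  intro hc
  obtain ⟨N, hN⟩ := eventually_atTop.1 (hu.and hc)
  obtain ⟨hu₀, hc₀⟩ := hN (2 * N) (by omega)
  obtain ⟨hu₁, hc₁⟩ := hN (2 * N + 1) (by omega)
  rw [if_pos (even_two_mul N)] at hu₀
  rw [if_neg (Nat.not_even_iff_odd.2 (odd_two_mul_add_one N))] at hu₁
  exact hb (hu₀.symm.trans (hc₀.trans (hc₁.symm.trans hu₁)))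

section ParityCode

abbrev zeroTwoShift : Set (ℤ → Fin 3) := {x | ∀ i, x i = 0 ∨ x i = 2}

noncomputable def parityCode (x : ℤ → Fin 3) : ℤ → Fin 3 :=
  fun i => if x i = 2 then 2 else if Even (nearestDist 2 x i) then 0 else 1

lemma parityCode_eq_two_iff {x : ℤ → Fin 3} {i : ℤ} : parityCode x i = 2 ↔ x i = 2 := by
  unfold parityCode
  split_ifs <;> simp_all

lemma commute_parityCode_tshift : Function.Commute parityCode tshift := fun x => by
  funext i
  simp only [parityCode, tshift, nearestDist_tshift]

lemma injOn_parityCode : InjOn parityCode zeroTwoShift := by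
  intro x hx y hy hxy
  funext i
  have h : x i = 2 ↔ y i = 2 := by
    rw [← parityCode_eq_two_iff, hxy, parityCode_eq_two_iff]
  rcases hx i with hx | hx <;> rcases hy i with hy | hy <;> simp_all

lemma tshift_iterate_mem_zeroTwoShift {x : ℤ → Fin 3} (hx : x ∈ zeroTwoShift) (n : ℕ) :
    tshift^[n] x ∈ zeroTwoShift := fun i => by
  rw [tshift_iterate_apply]
  exact hx _

lemma single_mem_zeroTwoShift (j : ℤ) : (Pi.single j 2 : ℤ → Fin 3) ∈ zeroTwoShift := fun i => by
  rw [Pi.single_apply]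
  split_ifs <;> simp

lemma exists_eq_two_of_mem_aper {x : ℤ → Fin 3} (hx : x ∈ Aper zeroTwoShift) : ∃ j, x j = 2 := by
  by_contra! h
  have hzero : x = fun _ => 0 := funext fun i => (hx.1 i).resolve_right (h i)
  exact hx.2 (hzero ▸ tperiodic_const 0)

lemma not_tperiodic_parityCode {x : ℤ → Fin 3} (hx : x ∈ Aper zeroTwoShift) :
    ¬ TPeriodic (parityCode x) := by
  rintro ⟨n, hn, hper⟩
  refine hx.2 ⟨n, hn, injOn_parityCode (tshift_iterate_mem_zeroTwoShift hx.1 n) hx.1 ?_⟩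
  rw [commute_parityCode_tshift.iterate_right n x, hper]

lemma continuousAt_parityCode_apply {x : ℤ → Fin 3} (hx : ∃ j, x j = 2) (i : ℤ) :
    ContinuousAt (fun y => parityCode y i) x := by
  set m := nearestDist 2 x i
  have hnear : ∀ᶠ y in 𝓝 x, ∀ j ∈ Finset.Icc (i - m) (i + m), y j = x j := by
    rw [eventually_all_finset]
    exact fun j _ => (continuous_apply j).continuousAt.eventually_mem
      ((isOpen_discrete {x j}).mem_nhds rfl)
  refine tendsto_nhds_of_eventually_eq (hnear.mono fun y hy => ?_)
  have hdist : nearestDist 2 y i = m := nearestDist_eq_of_eqOn hx fun k hk =>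
    ⟨hy _ (Finset.mem_Icc.2 (by omega)), hy _ (Finset.mem_Icc.2 (by omega))⟩
  simp only [parityCode, hdist, hy i (Finset.mem_Icc.2 (by omega)), m]

lemma continuousOn_parityCode : ContinuousOn parityCode {x | ∃ j, x j = 2} :=
  continuousOn_pi.2 fun i _ hx => (continuousAt_parityCode_apply hx i).continuousWithinAt

lemma parityCode_single_apply_zero {n : ℕ} (hn : 1 ≤ n) :
    parityCode (Pi.single (n : ℤ) 2) 0 = if Even n then 0 else 1 := by
  rw [parityCode, Pi.single_eq_of_ne (M := fun _ => Fin 3) (show (0 : ℤ) ≠ n by omega),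
    nearestDist_single (by decide : (2 : Fin 3) ≠ 0)]
  simp

end ParityCode

/-- With `X = {0,2}^ℤ` (viewed inside `{0,1,2}^ℤ`) and
`Y = {0,1,2}^ℤ` full shifts, there is a continuous shift-commuting map `f' : X' → Y'`
that is not the restriction of any continuous shift-commuting map `f : X → Y`. -/
theorem statement14 :
    ∃ f' : Aper {x : ℤ → Fin 3 | ∀ i, x i = 0 ∨ x i = 2} → Aper (univ : Set (ℤ → Fin 3)),
      Continuous f' ∧ ShiftCommuting2 f' ∧
      ¬ ∃ f : {x : ℤ → Fin 3 | ∀ i, x i = 0 ∨ x i = 2} → (univ : Set (ℤ → Fin 3)),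
        Continuous f ∧ ShiftCommuting2 f ∧ RestrictsTo2 f f' := by
  refine ⟨fun x => ⟨parityCode x, mem_univ _, not_tperiodic_parityCode x.2⟩, ?_,
    fun x _ => commute_parityCode_tshift x, ?_⟩
  · exact (continuousOn_parityCode.comp_continuous continuous_subtype_val
      fun x => exists_eq_two_of_mem_aper x.2).subtype_mk _
  · rintro ⟨f, hf, -, hrestr⟩
    let zero : zeroTwoShift := ⟨0, fun _ => Or.inl rfl⟩
    let single : ℕ → zeroTwoShift := fun n => ⟨Pi.single (n : ℤ) 2, single_mem_zeroTwoShift n⟩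
    have hsingle : Tendsto single atTop (𝓝 zero) :=
      tendsto_subtype_rng.2 (tendsto_single_atTop_zero 2)
    have hf₀ := (((continuous_apply 0).comp continuous_subtype_val).comp hf).tendsto zero
    refine not_tendsto_of_eventually_eq_ite (by decide : (0 : Fin 3) ≠ 1) ?_ (hf₀.comp hsingle)
    filter_upwards [eventually_ge_atTop 1] with n hn
    have haper : (single n : ℤ → Fin 3) ∈ Aper zeroTwoShift :=
      ⟨single_mem_zeroTwoShift n, not_tperiodic_single (by decide) _⟩
    exact (congrFun (hrestr _ haper) 0).trans (parityCode_single_apply_zero hn)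
end

section
/- Let X = {0,1,2}^ℕ and let Y = {x ∈ X : x_i ≠ 0 for infinitely many i} (equivalently, X with all points having only finitely many nonzero coordinates removed), with the subspace topology. Then there exists a homeomorphism g : Y → Y satisfying g(σ(x)) = σ(g(x)) for all x ∈ Y, such that for every point p ∈ X \ Y there is no continuous map from Y ∪ {p} (with the subspace topology from X) to X extending g. -/
open Set

/-- The one-sided shift map on `A^ℕ`. -/
def oshift {A : Type*} (x : ℕ → A) : ℕ → A := fun i => x (i + 1)

open Classical Topology Filter

noncomputable section

/-- drop the first `i` coordinates -/
def drp (x : ℕ → Fin 3) (i : ℕ) : ℕ → Fin 3 := fun j => x (i + j)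

@[simp] lemma drp_apply (x : ℕ → Fin 3) (i j : ℕ) : drp x i j = x (i + j) := rfl

lemma drp_drp (x : ℕ → Fin 3) (i j : ℕ) : drp (drp x i) j = drp x (i + j) := by
  funext l; simp [drp, Nat.add_assoc]

open Classical in
def phi (z : ℕ → Fin 3) : Fin 3 :=
  if h : ∃ i, z i ≠ 0 then
    if z (Nat.find h) = 1 then
      if Nat.find h = 0 then 1
      else if 2 ≤ Nat.find h ∧ z (Nat.find h + Nat.find h - 1) = 1 ∧
          (∀ l < Nat.find h - 2, z (Nat.find h + 1 + l) ≠ 1) then 2 else 0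
    else
      if 1 ≤ Nat.find h then 0
      else if h2 : ∃ i, z (1 + i) ≠ 0 then
        if z (1 + Nat.find h2) = 1 ∧ 1 ≤ Nat.find h2 ∧ z (2 * Nat.find h2 + 1) = 1 ∧
            (∀ l < Nat.find h2 - 1, z (Nat.find h2 + 2 + l) ≠ 1) then 0 else 2
      else 2
  else 0

def gg (x : ℕ → Fin 3) : ℕ → Fin 3 := fun i => phi (drp x i)

lemma gg_apply (x : ℕ → Fin 3) (i : ℕ) : gg x i = phi (drp x i) := rfl

lemma fin3_cases (a : Fin 3) : a = 0 ∨ a = 1 ∨ a = 2 := by revert a; decide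

lemma first_marker (z : ℕ → Fin 3) (h : ∃ i, z i ≠ 0) :
    ∃ d, z d ≠ 0 ∧ ∀ j < d, z j = 0 := by
  classical
  refine ⟨Nat.find h, Nat.find_spec h, fun j hj => ?_⟩
  have := Nat.find_min h hj
  simpa using this

lemma first_one (z : ℕ → Fin 3) (h : ∃ i, z i = 1) :
    ∃ m, z m = 1 ∧ ∀ j < m, z j ≠ 1 := by
  classical
  exact ⟨Nat.find h, Nat.find_spec h, fun j hj => Nat.find_min h hj⟩

lemma find_eq {z : ℕ → Fin 3} (h : ∃ i, z i ≠ 0) {d : ℕ}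
    (h0 : ∀ j < d, z j = 0) (hd : z d ≠ 0) : Nat.find h = d := by
  classical
  refine le_antisymm (Nat.find_le hd) ?_
  by_contra hlt
  push_neg at hlt
  exact (Nat.find_spec h) (h0 _ hlt)

-- phi evaluation lemmas, appended to chunk1 content for testing
section evals
variable {z : ℕ → Fin 3}

lemma phi_no (h : ∀ i, z i = 0) : phi z = 0 := by
  rw [phi, dif_neg]; push_neg; simpa using h

lemma phi_1a (h : z 0 = 1) : phi z = 1 := by
  have he : ∃ i, z i ≠ 0 := ⟨0, by rw [h]; decide⟩
  have hf : Nat.find he = 0 := find_eq he (fun j hj => by omega) (by rw [h]; decide)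
  rw [phi, dif_pos he, hf, h, if_pos rfl, if_pos rfl]

lemma phi_1hit (m : ℕ) (h0 : ∀ j < m + 2, z j = 0) (hd : z (m + 2) = 1)
    (hhit : z (m + 3 + m) = 1) (hfst : ∀ l < m, z (m + 3 + l) ≠ 1) : phi z = 2 := by
  have he : ∃ i, z i ≠ 0 := ⟨m + 2, by rw [hd]; decide⟩
  have hf : Nat.find he = m + 2 := find_eq he h0 (by rw [hd]; decide)
  rw [phi, dif_pos he, hf, hd, if_pos rfl, if_neg (by omega), if_pos]
  refine ⟨by omega, ?_, ?_⟩
  · rw [show m + 2 + (m + 2) - 1 = m + 3 + m by omega]; exact hhit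
  · intro l hl
    rw [show m + 2 + 1 + l = m + 3 + l by omega]
    exact hfst l (by omega)

lemma phi_1miss (d : ℕ) (hd1 : 1 ≤ d) (h0 : ∀ j < d, z j = 0) (hd : z d = 1)
    (hmiss : ¬(2 ≤ d ∧ z (d + d - 1) = 1 ∧ (∀ l < d - 2, z (d + 1 + l) ≠ 1))) :
    phi z = 0 := by
  have he : ∃ i, z i ≠ 0 := ⟨d, by rw [hd]; decide⟩
  have hf : Nat.find he = d := find_eq he h0 (by rw [hd]; decide)
  rw [phi, dif_pos he, hf, hd, if_pos rfl, if_neg (by omega), if_neg hmiss]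

lemma phi_2pos (d : ℕ) (hd1 : 1 ≤ d) (h0 : ∀ j < d, z j = 0) (hd : z d = 2) :
    phi z = 0 := by
  have he : ∃ i, z i ≠ 0 := ⟨d, by rw [hd]; decide⟩
  have hf : Nat.find he = d := find_eq he h0 (by rw [hd]; decide)
  rw [phi, dif_pos he, hf, hd, if_neg (by decide), if_pos hd1]

lemma phi_2del (e : ℕ) (hz0 : z 0 = 2) (h1 : 1 ≤ e) (he0 : ∀ j < e, z (1 + j) = 0)
    (hev : z (1 + e) = 1) (hhit : z (2 * e + 1) = 1)
    (hfst : ∀ l < e - 1, z (e + 2 + l) ≠ 1) : phi z = 0 := by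
  have he' : ∃ i, z i ≠ 0 := ⟨0, by rw [hz0]; decide⟩
  have hf : Nat.find he' = 0 := find_eq he' (fun j hj => by omega) (by rw [hz0]; decide)
  have h2 : ∃ i, z (1 + i) ≠ 0 := ⟨e, by rw [hev]; decide⟩
  have hf2 : Nat.find h2 = e := by
    refine le_antisymm (Nat.find_le (by rw [hev]; decide)) ?_
    by_contra hlt
    push_neg at hlt
    exact (Nat.find_spec h2) (he0 _ hlt)
  rw [phi, dif_pos he', hf, hz0, if_neg (by decide), if_neg (by omega), dif_pos h2, hf2,
    if_pos ⟨hev, h1, hhit, hfst⟩]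

lemma phi_2keep (e : ℕ) (hz0 : z 0 = 2) (he0 : ∀ j < e, z (1 + j) = 0)
    (hev : z (1 + e) ≠ 0)
    (hmiss : ¬(z (1 + e) = 1 ∧ 1 ≤ e ∧ z (2 * e + 1) = 1 ∧
      (∀ l < e - 1, z (e + 2 + l) ≠ 1))) : phi z = 2 := by
  have he' : ∃ i, z i ≠ 0 := ⟨0, by rw [hz0]; decide⟩
  have hf : Nat.find he' = 0 := find_eq he' (fun j hj => by omega) (by rw [hz0]; decide)
  have h2 : ∃ i, z (1 + i) ≠ 0 := ⟨e, hev⟩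
  have hf2 : Nat.find h2 = e := by
    refine le_antisymm (Nat.find_le hev) ?_
    by_contra hlt
    push_neg at hlt
    exact (Nat.find_spec h2) (he0 _ hlt)
  rw [phi, dif_pos he', hf, hz0, if_neg (by decide), if_neg (by omega), dif_pos h2, hf2,
    if_neg hmiss]

lemma phi_eq_one_iff : phi z = 1 ↔ z 0 = 1 := by
  constructor
  · intro h
    by_contra hne
    by_cases he : ∃ i, z i ≠ 0
    · rw [phi, dif_pos he] at h
      by_cases h1 : z (Nat.find he) = 1
      · rw [if_pos h1] at h
        by_cases h0 : Nat.find he = 0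
        · exact hne (h0 ▸ h1)
        · rw [if_neg h0] at h
          split at h <;> simp_all
      · rw [if_neg h1] at h
        split at h
        · simp at h
        · split at h
          · split at h <;> simp_all
          · simp at h
    · rw [phi, dif_neg he] at h; simp at h
  · exact phi_1a
end evals

-- gg helper lemmas
lemma gg_one_iff (x : ℕ → Fin 3) (i : ℕ) : gg x i = 1 ↔ x i = 1 := by
  rw [gg_apply, phi_eq_one_iff]; simp

lemma gg_drp (x : ℕ → Fin 3) (i j : ℕ) : gg x (i + j) = gg (drp x i) j := by
  rw [gg_apply, gg_apply, drp_drp]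

lemma gg_low_of_first1 (z : ℕ → Fin 3) (k m : ℕ) (h0 : ∀ j < k, z j = 0) (hk : z k = 1)
    (hm : z (k + 1 + m) = 1) (hm0 : ∀ l < m, z (k + 1 + l) ≠ 1)
    (j : ℕ) (hj : j < k) (hne : j + m + 2 ≠ k) : gg z j = 0 := by
  rw [gg_apply]
  refine phi_1miss (k - j) (by omega) (fun i hi => by simpa using h0 (j + i) (by omega))
    (by simpa [show j + (k - j) = k by omega] using hk) ?_
  rintro ⟨h2, hhit, hall⟩
  rw [drp_apply, show j + (k - j + (k - j) - 1) = k + 1 + (k - j - 2) by omega] at hhit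
  rcases lt_trichotomy (k - j - 2) m with hc | hc | hc
  · exact hm0 _ hc hhit
  · omega
  · exact hall m (by omega) (by simpa [show j + (k - j + 1 + m) = k + 1 + m by omega] using hm)

lemma gg_low_of_no1 (z : ℕ → Fin 3) (k : ℕ) (h0 : ∀ j < k, z j = 0) (hk : z k = 1)
    (hno : ∀ l, z (k + 1 + l) ≠ 1) (j : ℕ) (hj : j < k) : gg z j = 0 := by
  rw [gg_apply]
  refine phi_1miss (k - j) (by omega) (fun i hi => by simpa using h0 (j + i) (by omega))
    (by simpa [show j + (k - j) = k by omega] using hk) ?_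
  rintro ⟨h2, hhit, hall⟩
  rw [drp_apply, show j + (k - j + (k - j) - 1) = k + 1 + (k - j - 2) by omega] at hhit
  exact hno _ hhit

lemma gg_low_hit (z : ℕ → Fin 3) (j m : ℕ) (h0 : ∀ l < j + m + 2, z l = 0)
    (hk : z (j + m + 2) = 1) (hm : z (j + m + 2 + 1 + m) = 1)
    (hm0 : ∀ l < m, z (j + m + 2 + 1 + l) ≠ 1) : gg z j = 2 := by
  rw [gg_apply]
  refine phi_1hit m (fun i hi => by simpa using h0 (j + i) (by omega))
    (by simpa [show j + (m + 2) = j + m + 2 by omega] using hk)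
    (by simpa [show j + (m + 3 + m) = j + m + 2 + 1 + m by omega] using hm)
    (fun l hl => by simpa [show j + (m + 3 + l) = j + m + 2 + 1 + l by omega] using hm0 l hl)

lemma gg_low_2 (z : ℕ → Fin 3) (k : ℕ) (h0 : ∀ j < k, z j = 0) (hk : z k = 2)
    (j : ℕ) (hj : j < k) : gg z j = 0 := by
  rw [gg_apply]
  exact phi_2pos (k - j) (by omega) (fun i hi => by simpa using h0 (j + i) (by omega))
    (by simpa [show j + (k - j) = k by omega] using hk)

lemma gg_at_2del (z : ℕ → Fin 3) (k e : ℕ) (hk : z k = 2) (h1 : 1 ≤ e)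
    (he0 : ∀ j < e, z (k + 1 + j) = 0) (hev : z (k + 1 + e) = 1)
    (hhit : z (k + 2 * e + 1) = 1) (hfst : ∀ l < e - 1, z (k + e + 2 + l) ≠ 1) :
    gg z k = 0 := by
  rw [gg_apply]
  refine phi_2del e (by simpa using hk) h1
    (fun j hj => by simpa [show k + (1 + j) = k + 1 + j by omega] using he0 j hj)
    (by simpa [show k + (1 + e) = k + 1 + e by omega] using hev)
    (by simpa [show k + (2 * e + 1) = k + 2 * e + 1 by omega] using hhit)
    (fun l hl => by simpa [show k + (e + 2 + l) = k + e + 2 + l by omega] using hfst l hl)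

lemma gg_at_2keep (z : ℕ → Fin 3) (k e : ℕ) (hk : z k = 2)
    (he0 : ∀ j < e, z (k + 1 + j) = 0) (hev : z (k + 1 + e) ≠ 0)
    (hmiss : ¬(z (k + 1 + e) = 1 ∧ 1 ≤ e ∧ z (k + 2 * e + 1) = 1 ∧
      (∀ l < e - 1, z (k + e + 2 + l) ≠ 1))) : gg z k = 2 := by
  rw [gg_apply]
  refine phi_2keep e (by simpa using hk)
    (fun j hj => by simpa [show k + (1 + j) = k + 1 + j by omega] using he0 j hj)
    (by simpa [show k + (1 + e) = k + 1 + e by omega] using hev) ?_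
  rintro ⟨a, b, c, d⟩
  refine hmiss ⟨by simpa [show k + (1 + e) = k + 1 + e by omega] using a, b,
    by simpa [show k + (2 * e + 1) = k + 2 * e + 1 by omega] using c, fun l hl => ?_⟩
  simpa [show k + (e + 2 + l) = k + e + 2 + l by omega] using d l hl

-- Case z k = 1 of the involution lemma
lemma invCaseOne (z : ℕ → Fin 3) (k : ℕ) (hk0 : ∀ j < k, z j = 0) (hc1 : z k = 1) :
    phi (gg z) = z 0 := by
  have hatk : gg z k = 1 := (gg_one_iff z k).2 hc1
  by_cases h1r : ∃ l, z (k + 1 + l) = 1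
  · have hx : ∃ m, z (k + 1 + m) = 1 ∧ ∀ j < m, z (k + 1 + j) ≠ 1 := by
      obtain ⟨m, hm, hm0⟩ := first_one (drp z (k + 1)) (by
        obtain ⟨l, hl⟩ := h1r; exact ⟨l, by simpa using hl⟩)
      exact ⟨m, by simpa using hm, fun j hj => by simpa using hm0 j hj⟩
    obtain ⟨m, hm, hm0⟩ := hx
    by_cases hkD : k < m + 2
    · -- keep case
      have hlow : ∀ j < k, gg z j = 0 := fun j hj =>
        gg_low_of_first1 z k m hk0 hc1 hm hm0 j hj (by omega)
      rcases Nat.eq_zero_or_pos k with hk' | hkpos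
      · rw [phi_1a (by rw [hk'] at hatk; exact hatk), ← hk', hc1]
      · rw [show z 0 = 0 from hk0 0 hkpos]
        refine phi_1miss k hkpos hlow hatk ?_
        rintro ⟨h2, hhit, hall⟩
        rw [gg_one_iff] at hhit
        rw [show k + k - 1 = k + 1 + (k - 2) by omega] at hhit
        exact hm0 (k - 2) (by omega) hhit
    · -- insert case
      push_neg at hkD
      have hlow1 : ∀ j < k, j ≠ k - (m + 2) → gg z j = 0 := fun j hj hne =>
        gg_low_of_first1 z k m hk0 hc1 hm hm0 j hj (by omega)
      have hhit2 : gg z (k - (m + 2)) = 2 := by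
        refine gg_low_hit z (k - (m + 2)) m (fun l hl => hk0 l (by omega)) ?_ ?_ ?_
        · rw [show k - (m + 2) + m + 2 = k by omega]; exact hc1
        · rw [show k - (m + 2) + m + 2 + 1 + m = k + 1 + m by omega]; exact hm
        · intro l hl
          rw [show k - (m + 2) + m + 2 + 1 + l = k + 1 + l by omega]
          exact hm0 l hl
      rcases Nat.eq_zero_or_pos (k - (m + 2)) with hj00 | hj0pos
      · -- k = m + 2 : deletion fires on the image
        have hkm : k = m + 2 := by omega
        rw [show z 0 = 0 from hk0 0 (by omega)]
        refine phi_2del (m + 1) (by rw [hj00] at hhit2; exact hhit2) (by omega)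
          (fun j hj => ?_) ?_ ?_ ?_
        · exact hlow1 (1 + j) (by omega) (by omega)
        · rw [show 1 + (m + 1) = k by omega]; exact hatk
        · rw [gg_one_iff, show 2 * (m + 1) + 1 = k + 1 + m by omega]; exact hm
        · intro l hl hcon
          rw [gg_one_iff, show m + 1 + 2 + l = k + 1 + l by omega] at hcon
          exact hm0 l (by omega) hcon
      · rw [show z 0 = 0 from hk0 0 (by omega)]
        exact phi_2pos (k - (m + 2)) hj0pos
          (fun j hj => hlow1 j (by omega) (by omega)) hhit2
  · push_neg at h1r
    have hlow : ∀ j < k, gg z j = 0 := gg_low_of_no1 z k hk0 hc1 h1r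
    rcases Nat.eq_zero_or_pos k with hk' | hkpos
    · rw [phi_1a (by rw [hk'] at hatk; exact hatk), ← hk', hc1]
    · rw [show z 0 = 0 from hk0 0 hkpos]
      refine phi_1miss k hkpos hlow hatk ?_
      rintro ⟨h2, hhit, hall⟩
      rw [gg_one_iff, show k + k - 1 = k + 1 + (k - 2) by omega] at hhit
      exact h1r (k - 2) hhit

-- Case z k = 2 of the involution lemma
lemma invCaseTwo (z : ℕ → Fin 3) (k : ℕ) (hz : ∀ n, ∃ i, z (n + i) ≠ 0)
    (hk0 : ∀ j < k, z j = 0) (hc2 : z k = 2) : phi (gg z) = z 0 := by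
  have hex : ∃ i, drp z (k + 1) i ≠ 0 := by
    obtain ⟨i, hi⟩ := hz (k + 1); exact ⟨i, by simpa using hi⟩
  obtain ⟨e, hev', he0'⟩ := first_marker _ hex
  have hev : z (k + 1 + e) ≠ 0 := by simpa using hev'
  have he0 : ∀ j < e, z (k + 1 + j) = 0 := fun j hj => by simpa using he0' j hj
  have hlow : ∀ j < k, gg z j = 0 := gg_low_2 z k hk0 hc2
  rcases fin3_cases (z (k + 1 + e)) with h0v | hv1 | hv2
  · exact absurd h0v hev
  · -- v = 1
    by_cases h12 : ∃ l, z (k + 1 + e + 1 + l) = 1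
    · have hx2 : ∃ m2, z (k + 1 + e + 1 + m2) = 1 ∧ ∀ j < m2, z (k + 1 + e + 1 + j) ≠ 1 := by
        obtain ⟨l, hl⟩ := h12
        obtain ⟨m2, hm2, hm20⟩ := first_one (drp z (k + 1 + e + 1)) ⟨l, by simpa using hl⟩
        exact ⟨m2, by simpa using hm2, fun j hj => by simpa using hm20 j hj⟩
      obtain ⟨m2, hm2, hm20⟩ := hx2
      by_cases hDC : e = m2 + 1
      · -- deletion fires at z's first marker
        have hatk : gg z k = 0 := by
          refine gg_at_2del z k e hc2 (by omega) he0 hv1 ?_ ?_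
          · rw [show k + 2 * e + 1 = k + 1 + e + 1 + m2 by omega]; exact hm2
          · intro l hl
            rw [show k + e + 2 + l = k + 1 + e + 1 + l by omega]
            exact hm20 l (by omega)
        have htl : ∀ j < e, gg z (k + 1 + j) = 0 := fun j hj => by
          rw [gg_drp]
          refine gg_low_of_first1 (drp z (k + 1)) e m2 (fun i hi => by simpa using he0 i hi)
            (by simpa using hv1) ?_ ?_ j hj (by omega)
          · rw [drp_apply, show k + 1 + (e + 1 + m2) = k + 1 + e + 1 + m2 by omega]; exact hm2
          · intro l hl
            rw [drp_apply, show k + 1 + (e + 1 + l) = k + 1 + e + 1 + l by omega]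
            exact hm20 l hl
        have hte : gg z (k + 1 + e) = 1 := (gg_one_iff _ _).2 hv1
        have h00 : ∀ j < k + 1 + e, gg z j = 0 := by
          intro j hj
          rcases lt_trichotomy j k with h | h | h
          · exact hlow j h
          · rw [h]; exact hatk
          · rw [show j = k + 1 + (j - (k + 1)) by omega]; exact htl _ (by omega)
        rcases Nat.eq_zero_or_pos k with hk' | hkpos
        · rw [show (z 0 : Fin 3) = 2 from hk' ▸ hc2]
          refine phi_1hit m2 (fun j hj => h00 j (by omega)) ?_ ?_ ?_
          · rw [show m2 + 2 = k + 1 + e by omega]; exact hte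
          · rw [gg_one_iff, show m2 + 3 + m2 = k + 1 + e + 1 + m2 by omega]; exact hm2
          · intro l hl hcon
            rw [gg_one_iff, show m2 + 3 + l = k + 1 + e + 1 + l by omega] at hcon
            exact hm20 l hl hcon
        · rw [show z 0 = 0 from hk0 0 hkpos]
          refine phi_1miss (k + 1 + e) (by omega) h00 hte ?_
          rintro ⟨h2, hhit, hall⟩
          exact hall m2 (by omega) ((gg_one_iff _ _).2 hm2)
      · -- v = 1, keep
        have hatk : gg z k = 2 := by
          refine gg_at_2keep z k e hc2 he0 (by rw [hv1]; decide) ?_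
          rintro ⟨a, b, c, d⟩
          rw [show k + 2 * e + 1 = k + 1 + e + 1 + (e - 1) by omega] at c
          rcases lt_trichotomy (e - 1) m2 with h | h | h
          · exact hm20 _ h c
          · omega
          · refine d m2 (by omega) ?_
            rw [show k + e + 2 + m2 = k + 1 + e + 1 + m2 by omega]; exact hm2
        rcases Nat.eq_zero_or_pos k with hk' | hkpos
        · by_cases hins : m2 + 2 ≤ e
          · have hj0 : gg z (k + 1 + (e - (m2 + 2))) = 2 := by
              rw [gg_drp]
              refine gg_low_hit (drp z (k + 1)) (e - (m2 + 2)) m2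
                (fun l hl => by simpa using he0 l (by omega)) ?_ ?_ ?_
              · rw [drp_apply, show k + 1 + (e - (m2 + 2) + m2 + 2) = k + 1 + e by omega]
                exact hv1
              · rw [drp_apply,
                  show k + 1 + (e - (m2 + 2) + m2 + 2 + 1 + m2) = k + 1 + e + 1 + m2 by omega]
                exact hm2
              · intro l hl
                rw [drp_apply,
                  show k + 1 + (e - (m2 + 2) + m2 + 2 + 1 + l) = k + 1 + e + 1 + l by omega]
                exact hm20 l hl
            have htl2 : ∀ j < e, j ≠ e - (m2 + 2) → gg z (k + 1 + j) = 0 := by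
              intro j hj hne
              rw [gg_drp]
              refine gg_low_of_first1 (drp z (k + 1)) e m2 (fun i hi => by simpa using he0 i hi)
                (by simpa using hv1) ?_ ?_ j hj (by omega)
              · rw [drp_apply, show k + 1 + (e + 1 + m2) = k + 1 + e + 1 + m2 by omega]; exact hm2
              · intro l hl
                rw [drp_apply, show k + 1 + (e + 1 + l) = k + 1 + e + 1 + l by omega]
                exact hm20 l hl
            rw [show (z 0 : Fin 3) = 2 from hk' ▸ hc2]
            refine phi_2keep (e - (m2 + 2)) (hk' ▸ hatk) ?_ ?_ ?_
            · intro j hj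
              rw [show 1 + j = k + 1 + j by omega]; exact htl2 j (by omega) (by omega)
            · rw [show 1 + (e - (m2 + 2)) = k + 1 + (e - (m2 + 2)) by omega, hj0]; decide
            · rintro ⟨a, _, _, _⟩
              rw [show 1 + (e - (m2 + 2)) = k + 1 + (e - (m2 + 2)) by omega, hj0] at a
              exact absurd a (by decide)
          · have htl : ∀ j < e, gg z (k + 1 + j) = 0 := by
              intro j hj
              rw [gg_drp]
              refine gg_low_of_first1 (drp z (k + 1)) e m2 (fun i hi => by simpa using he0 i hi)
                (by simpa using hv1) ?_ ?_ j hj (by omega)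
              · rw [drp_apply, show k + 1 + (e + 1 + m2) = k + 1 + e + 1 + m2 by omega]; exact hm2
              · intro l hl
                rw [drp_apply, show k + 1 + (e + 1 + l) = k + 1 + e + 1 + l by omega]
                exact hm20 l hl
            have hte : gg z (k + 1 + e) = 1 := (gg_one_iff _ _).2 hv1
            rw [show (z 0 : Fin 3) = 2 from hk' ▸ hc2]
            refine phi_2keep e (hk' ▸ hatk) ?_ ?_ ?_
            · intro j hj; rw [show 1 + j = k + 1 + j by omega]; exact htl j hj
            · rw [show 1 + e = k + 1 + e by omega, hte]; decide
            · rintro ⟨a, b, c, d⟩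
              rw [gg_one_iff, show 2 * e + 1 = k + 1 + e + 1 + (e - 1) by omega] at c
              exact hm20 (e - 1) (by omega) c
        · rw [show z 0 = 0 from hk0 0 hkpos]
          exact phi_2pos k hkpos hlow hatk
    · -- v = 1, no 1 afterwards
      push_neg at h12
      have hatk : gg z k = 2 := by
        refine gg_at_2keep z k e hc2 he0 (by rw [hv1]; decide) ?_
        rintro ⟨a, b, c, d⟩
        rw [show k + 2 * e + 1 = k + 1 + e + 1 + (e - 1) by omega] at c
        exact h12 _ c
      rcases Nat.eq_zero_or_pos k with hk' | hkpos
      · have htl : ∀ j < e, gg z (k + 1 + j) = 0 := by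
          intro j hj
          rw [gg_drp]
          refine gg_low_of_no1 (drp z (k + 1)) e (fun i hi => by simpa using he0 i hi)
            (by simpa using hv1) ?_ j hj
          intro l
          rw [drp_apply, show k + 1 + (e + 1 + l) = k + 1 + e + 1 + l by omega]
          exact h12 l
        have hte : gg z (k + 1 + e) = 1 := (gg_one_iff _ _).2 hv1
        rw [show (z 0 : Fin 3) = 2 from hk' ▸ hc2]
        refine phi_2keep e (hk' ▸ hatk) ?_ ?_ ?_
        · intro j hj; rw [show 1 + j = k + 1 + j by omega]; exact htl j hj
        · rw [show 1 + e = k + 1 + e by omega, hte]; decide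
        · rintro ⟨a, b, c, d⟩
          rw [gg_one_iff, show 2 * e + 1 = k + 1 + e + 1 + (e - 1) by omega] at c
          exact h12 _ c
      · rw [show z 0 = 0 from hk0 0 hkpos]
        exact phi_2pos k hkpos hlow hatk
  · -- v = 2
    have hatk : gg z k = 2 := by
      refine gg_at_2keep z k e hc2 he0 (by rw [hv2]; decide) ?_
      rintro ⟨a, _, _, _⟩
      rw [hv2] at a; exact absurd a (by decide)
    rcases Nat.eq_zero_or_pos k with hk' | hkpos
    · have hex2 : ∃ i, drp z (k + 1 + e + 1) i ≠ 0 := by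
        obtain ⟨i, hi⟩ := hz (k + 1 + e + 1); exact ⟨i, by simpa using hi⟩
      obtain ⟨e2, hev2', he20'⟩ := first_marker _ hex2
      have hev2 : z (k + 1 + e + 1 + e2) ≠ 0 := by simpa using hev2'
      have he20 : ∀ j < e2, z (k + 1 + e + 1 + j) = 0 := fun j hj => by simpa using he20' j hj
      have htl : ∀ j < e, gg z (k + 1 + j) = 0 := by
        intro j hj
        rw [gg_drp]
        exact gg_low_2 (drp z (k + 1)) e (fun i hi => by simpa using he0 i hi)
          (by simpa using hv2) j hj
      have finish2 : gg z (k + 1 + e) = 2 → phi (gg z) = z 0 := by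
        intro hkeep
        rw [show (z 0 : Fin 3) = 2 from hk' ▸ hc2]
        refine phi_2keep e (hk' ▸ hatk) ?_ ?_ ?_
        · intro j hj; rw [show 1 + j = k + 1 + j by omega]; exact htl j hj
        · rw [show 1 + e = k + 1 + e by omega, hkeep]; decide
        · rintro ⟨a, _, _, _⟩
          rw [show 1 + e = k + 1 + e by omega, hkeep] at a
          exact absurd a (by decide)
      rcases fin3_cases (z (k + 1 + e + 1 + e2)) with h0' | hw1 | hw2
      · exact absurd h0' hev2
      · -- second marker has value 1
        by_cases h13 : ∃ l, z (k + 1 + e + 1 + e2 + 1 + l) = 1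
        · have hx3 : ∃ m3, z (k + 1 + e + 1 + e2 + 1 + m3) = 1 ∧
              ∀ j < m3, z (k + 1 + e + 1 + e2 + 1 + j) ≠ 1 := by
            obtain ⟨l, hl⟩ := h13
            obtain ⟨m3, hm3, hm30⟩ := first_one (drp z (k + 1 + e + 1 + e2 + 1)) ⟨l, by simpa using hl⟩
            exact ⟨m3, by simpa using hm3, fun j hj => by simpa using hm30 j hj⟩
          obtain ⟨m3, hm3, hm30⟩ := hx3
          by_cases hDC2 : e2 = m3 + 1
          · -- the 2-marker at k+1+e gets deleted
            have hdel : gg z (k + 1 + e) = 0 := by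
              rw [gg_drp]
              refine gg_at_2del (drp z (k + 1)) e e2 (by simpa using hv2) (by omega) ?_ ?_ ?_ ?_
              · intro j hj
                rw [drp_apply, show k + 1 + (e + 1 + j) = k + 1 + e + 1 + j by omega]
                exact he20 j hj
              · rw [drp_apply, show k + 1 + (e + 1 + e2) = k + 1 + e + 1 + e2 by omega]; exact hw1
              · rw [drp_apply,
                  show k + 1 + (e + 2 * e2 + 1) = k + 1 + e + 1 + e2 + 1 + m3 by omega]
                exact hm3
              · intro l hl
                rw [drp_apply, show k + 1 + (e + e2 + 2 + l) = k + 1 + e + 1 + e2 + 1 + l by omega]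
                exact hm30 l (by omega)
            have htl3 : ∀ j < e2, gg z (k + 1 + e + 1 + j) = 0 := by
              intro j hj
              rw [gg_drp]
              refine gg_low_of_first1 (drp z (k + 1 + e + 1)) e2 m3
                (fun i hi => by simpa using he20 i hi) (by simpa using hw1) ?_ ?_ j hj (by omega)
              · rw [drp_apply,
                  show k + 1 + e + 1 + (e2 + 1 + m3) = k + 1 + e + 1 + e2 + 1 + m3 by omega]
                exact hm3
              · intro l hl
                rw [drp_apply,
                  show k + 1 + e + 1 + (e2 + 1 + l) = k + 1 + e + 1 + e2 + 1 + l by omega]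
                exact hm30 l hl
            have hte2 : gg z (k + 1 + e + 1 + e2) = 1 := (gg_one_iff _ _).2 hw1
            have h00 : ∀ j < e + 1 + e2, gg z (1 + j) = 0 := by
              intro j hj
              rcases lt_trichotomy j e with h | h | h
              · rw [show 1 + j = k + 1 + j by omega]; exact htl j h
              · rw [show 1 + j = k + 1 + e by omega]; exact hdel
              · rw [show 1 + j = k + 1 + e + 1 + (j - (e + 1)) by omega]; exact htl3 _ (by omega)
            rw [show (z 0 : Fin 3) = 2 from hk' ▸ hc2]
            refine phi_2keep (e + 1 + e2) (hk' ▸ hatk) h00 ?_ ?_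
            · rw [show 1 + (e + 1 + e2) = k + 1 + e + 1 + e2 by omega, hte2]; decide
            · rintro ⟨a, b, c, d⟩
              refine d m3 (by omega) ?_
              rw [gg_one_iff, show e + 1 + e2 + 2 + m3 = k + 1 + e + 1 + e2 + 1 + m3 by omega]
              exact hm3
          · -- no deletion
            have hkeep : gg z (k + 1 + e) = 2 := by
              rw [gg_drp]
              refine gg_at_2keep (drp z (k + 1)) e e2 (by simpa using hv2) ?_ ?_ ?_
              · intro j hj
                rw [drp_apply, show k + 1 + (e + 1 + j) = k + 1 + e + 1 + j by omega]
                exact he20 j hj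
              · rw [drp_apply, show k + 1 + (e + 1 + e2) = k + 1 + e + 1 + e2 by omega, hw1]
                decide
              · rintro ⟨a, b, c, d⟩
                rw [drp_apply,
                  show k + 1 + (e + 2 * e2 + 1) = k + 1 + e + 1 + e2 + 1 + (e2 - 1) by omega] at c
                rcases lt_trichotomy (e2 - 1) m3 with h | h | h
                · exact hm30 _ h c
                · omega
                · refine d m3 (by omega) ?_
                  rw [drp_apply,
                    show k + 1 + (e + e2 + 2 + m3) = k + 1 + e + 1 + e2 + 1 + m3 by omega]
                  exact hm3
            exact finish2 hkeep
        · push_neg at h13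
          have hkeep : gg z (k + 1 + e) = 2 := by
            rw [gg_drp]
            refine gg_at_2keep (drp z (k + 1)) e e2 (by simpa using hv2) ?_ ?_ ?_
            · intro j hj
              rw [drp_apply, show k + 1 + (e + 1 + j) = k + 1 + e + 1 + j by omega]
              exact he20 j hj
            · rw [drp_apply, show k + 1 + (e + 1 + e2) = k + 1 + e + 1 + e2 by omega, hw1]
              decide
            · rintro ⟨a, b, c, d⟩
              rw [drp_apply,
                show k + 1 + (e + 2 * e2 + 1) = k + 1 + e + 1 + e2 + 1 + (e2 - 1) by omega] at c
              exact h13 _ c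
          exact finish2 hkeep
      · -- second marker has value 2
        have hkeep : gg z (k + 1 + e) = 2 := by
          rw [gg_drp]
          refine gg_at_2keep (drp z (k + 1)) e e2 (by simpa using hv2) ?_ ?_ ?_
          · intro j hj
            rw [drp_apply, show k + 1 + (e + 1 + j) = k + 1 + e + 1 + j by omega]
            exact he20 j hj
          · rw [drp_apply, show k + 1 + (e + 1 + e2) = k + 1 + e + 1 + e2 by omega, hw2]
            decide
          · rintro ⟨a, _, _, _⟩
            rw [drp_apply, show k + 1 + (e + 1 + e2) = k + 1 + e + 1 + e2 by omega, hw2] at a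
            exact absurd a (by decide)
        exact finish2 hkeep
    · rw [show z 0 = 0 from hk0 0 hkpos]
      exact phi_2pos k hkpos hlow hatk

lemma phi_gg (z : ℕ → Fin 3) (hz : ∀ n, ∃ i, z (n + i) ≠ 0) : phi (gg z) = z 0 := by
  obtain ⟨k, hk, hk0⟩ := first_marker z (by simpa using hz 0)
  rcases fin3_cases (z k) with h | h | h
  · exact absurd h hk
  · exact invCaseOne z k hk0 h
  · exact invCaseTwo z k hz hk0 h

lemma hz_of_inf {x : ℕ → Fin 3} (hx : {i | x i ≠ 0}.Infinite) :
    ∀ n, ∃ i, x (n + i) ≠ 0 := by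
  intro n
  by_contra hc
  push_neg at hc
  refine hx (Set.Finite.subset (Set.finite_Iio n) ?_)
  intro i hi
  by_contra hni
  simp only [Set.mem_Iio, not_lt] at hni
  exact hi (by simpa [show n + (i - n) = i by omega] using hc (i - n))

lemma drp_gg (x : ℕ → Fin 3) (i : ℕ) : drp (gg x) i = gg (drp x i) := by
  funext j; exact gg_drp x i j

lemma hz_drp {x : ℕ → Fin 3} (hx : ∀ n, ∃ i, x (n + i) ≠ 0) (i : ℕ) :
    ∀ n, ∃ j, (drp x i) (n + j) ≠ 0 := by
  intro n
  obtain ⟨j, hj⟩ := hx (i + n)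
  exact ⟨j, by simpa [Nat.add_assoc] using hj⟩

lemma gg_gg {x : ℕ → Fin 3} (hx : ∀ n, ∃ i, x (n + i) ≠ 0) : gg (gg x) = x := by
  funext i
  have : gg (gg x) i = phi (gg (drp x i)) := by rw [gg_apply, drp_gg]
  rw [this, phi_gg (drp x i) (hz_drp hx i)]
  simp

lemma gg_inf {x : ℕ → Fin 3} (hx : {i | x i ≠ 0}.Infinite) :
    {i | gg x i ≠ 0}.Infinite := by
  by_contra hc
  rw [Set.not_infinite] at hc
  obtain ⟨M, hM⟩ := hc.bddAbove
  have hzero : ∀ j, M + 1 ≤ j → gg x j = 0 := by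
    intro j hj
    by_contra hne
    exact absurd (hM hne) (by omega)
  have : ∀ j, M + 1 ≤ j → x j = 0 := by
    intro j hj
    have h1 : x j = phi (gg (drp x j)) := by
      rw [phi_gg (drp x j) (hz_drp (hz_of_inf hx) j)]; simp
    rw [h1, ← drp_gg]
    exact phi_no (fun l => hzero (j + l) (by omega))
  obtain ⟨i, hi⟩ := hz_of_inf hx (M + 1)
  exact hi (this (M + 1 + i) (by omega))

section locality
variable {z : ℕ → Fin 3}

lemma phi_1pos (d : ℕ) (hd1 : 1 ≤ d) (h0 : ∀ j < d, z j = 0) (hd : z d = 1) :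
    phi z = if 2 ≤ d ∧ z (d + d - 1) = 1 ∧ (∀ l < d - 2, z (d + 1 + l) ≠ 1) then 2 else 0 := by
  have he : ∃ i, z i ≠ 0 := ⟨d, by rw [hd]; decide⟩
  have hf : Nat.find he = d := find_eq he h0 (by rw [hd]; decide)
  rw [phi, dif_pos he, hf, hd, if_pos rfl, if_neg (by omega)]

lemma phi_20 (e : ℕ) (hz0 : z 0 = 2) (he0 : ∀ j < e, z (1 + j) = 0) (hev : z (1 + e) ≠ 0) :
    phi z = if z (1 + e) = 1 ∧ 1 ≤ e ∧ z (2 * e + 1) = 1 ∧ (∀ l < e - 1, z (e + 2 + l) ≠ 1)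
      then 0 else 2 := by
  have he' : ∃ i, z i ≠ 0 := ⟨0, by rw [hz0]; decide⟩
  have hf : Nat.find he' = 0 := find_eq he' (fun j hj => by omega) (by rw [hz0]; decide)
  have h2 : ∃ i, z (1 + i) ≠ 0 := ⟨e, hev⟩
  have hf2 : Nat.find h2 = e := by
    refine le_antisymm (Nat.find_le hev) ?_
    by_contra hlt
    push_neg at hlt
    exact (Nat.find_spec h2) (he0 _ hlt)
  rw [phi, dif_pos he', hf, hz0, if_neg (by decide), if_neg (by omega), dif_pos h2, hf2]

lemma phi_local (w : ℕ → Fin 3) (d e : ℕ) (h0 : ∀ j < d, z j = 0) (hd : z d ≠ 0)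
    (he0 : ∀ j < e, z (d + 1 + j) = 0) (he : z (d + 1 + e) ≠ 0)
    (hw : ∀ j ≤ 2 * d + 2 * e + 6, w j = z j) : phi w = phi z := by
  have h0w : ∀ j < d, w j = 0 := fun j hj => by rw [hw j (by omega)]; exact h0 j hj
  have hdw : w d = z d := hw d (by omega)
  rcases fin3_cases (z d) with h | h | h
  · exact absurd h hd
  · rcases Nat.eq_zero_or_pos d with hd0 | hdpos
    · rw [phi_1a (by rw [show (0:ℕ) = d from hd0.symm, hdw]; exact h),
        phi_1a (by rw [show (0:ℕ) = d from hd0.symm]; exact h)]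
    · rw [phi_1pos d hdpos h0w (by rw [hdw, h]), phi_1pos d hdpos h0 h]
      congr 1
      have e1 : w (d + d - 1) = z (d + d - 1) := hw _ (by omega)
      have e2 : ∀ l < d - 2, w (d + 1 + l) = z (d + 1 + l) := fun l hl => hw _ (by omega)
      rw [eq_iff_iff]
      constructor
      · rintro ⟨a, b, c⟩
        exact ⟨a, by rw [← e1]; exact b, fun l hl => by rw [← e2 l hl]; exact c l hl⟩
      · rintro ⟨a, b, c⟩
        exact ⟨a, by rw [e1]; exact b, fun l hl => by rw [e2 l hl]; exact c l hl⟩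
  · rcases Nat.eq_zero_or_pos d with hd0 | hdpos
    · subst hd0
      have he0' : ∀ j < e, z (1 + j) = 0 := fun j hj => by
        have := he0 j hj; rwa [show 0 + 1 + j = 1 + j by omega] at this
      have hev : z (1 + e) ≠ 0 := by
        have := he; rwa [show 0 + 1 + e = 1 + e by omega] at this
      have he0w : ∀ j < e, w (1 + j) = 0 := fun j hj => by
        rw [hw _ (by omega)]; exact he0' j hj
      have hevw : w (1 + e) ≠ 0 := by rw [hw _ (by omega)]; exact hev
      rw [phi_20 e (by rw [hw 0 (by omega)]; exact h) he0w hevw, phi_20 e h he0' hev]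
      congr 1
      have e1 : w (1 + e) = z (1 + e) := hw _ (by omega)
      have e2 : w (2 * e + 1) = z (2 * e + 1) := hw _ (by omega)
      have e3 : ∀ l < e - 1, w (e + 2 + l) = z (e + 2 + l) := fun l hl => hw _ (by omega)
      rw [eq_iff_iff]
      constructor
      · rintro ⟨a, b, c, d'⟩
        exact ⟨by rw [← e1]; exact a, b, by rw [← e2]; exact c,
          fun l hl => by rw [← e3 l hl]; exact d' l hl⟩
      · rintro ⟨a, b, c, d'⟩
        exact ⟨by rw [e1]; exact a, b, by rw [e2]; exact c,
          fun l hl => by rw [e3 l hl]; exact d' l hl⟩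
    · rw [phi_2pos d hdpos h0w (by rw [hdw, h]), phi_2pos d hdpos h0 h]
end locality

-- continuity of each coordinate of gg on the subtype
lemma gg_coord_cont (i : ℕ) :
    Continuous (fun a : {x : ℕ → Fin 3 // {i | x i ≠ 0}.Infinite} =>
      gg (a : ℕ → Fin 3) i) := by
  rw [continuous_iff_continuousAt]
  intro a
  have hz : ∀ n, ∃ j, (drp (a : ℕ → Fin 3) i) (n + j) ≠ 0 := hz_drp (hz_of_inf a.2) i
  obtain ⟨d, hd, hd0⟩ := first_marker _ (by simpa using hz 0)
  obtain ⟨e, he, he0⟩ := first_marker (drp (drp (a : ℕ → Fin 3) i) (d + 1)) (by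
    obtain ⟨j, hj⟩ := hz (d + 1)
    exact ⟨j, by simpa [drp_drp] using hj⟩)
  set N := 2 * d + 2 * e + 6 with hN
  have hUopen : IsOpen (⋂ j ∈ Finset.range (N + 1),
      {w : ℕ → Fin 3 | w (i + j) = (a : ℕ → Fin 3) (i + j)}) := by
    refine isOpen_biInter_finset fun j _ => ?_
    have hset : {w : ℕ → Fin 3 | w (i + j) = (a : ℕ → Fin 3) (i + j)} =
        (fun w : ℕ → Fin 3 => w (i + j)) ⁻¹' {(a : ℕ → Fin 3) (i + j)} := rfl
    rw [hset]
    exact (continuous_apply (i + j)).isOpen_preimage _ (isOpen_discrete _)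
  have hmemU : a ∈ Subtype.val ⁻¹' (⋂ j ∈ Finset.range (N + 1),
      {w : ℕ → Fin 3 | w (i + j) = (a : ℕ → Fin 3) (i + j)}) := by
    simp
  refine ContinuousAt.congr (continuousAt_const (y := gg (a : ℕ → Fin 3) i)) ?_
  refine Filter.eventuallyEq_of_mem
    ((hUopen.preimage continuous_subtype_val).mem_nhds hmemU) ?_
  intro b hb
  simp only [Set.mem_preimage, Set.mem_iInter, Set.mem_setOf_eq] at hb
  show gg (a : ℕ → Fin 3) i = gg (b : ℕ → Fin 3) i
  rw [gg_apply, gg_apply]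
  refine (phi_local (drp (b : ℕ → Fin 3) i) d e hd0 hd
    (fun j hj => by simpa [drp_drp] using he0 j hj)
    (by simpa [drp_drp] using he) ?_).symm
  intro j hj
  simpa using (hb j (by simp; omega))

lemma phi_P (m : ℕ) : phi (fun j => if j < m + 3 then 0 else 1) = 0 := by
  refine phi_1miss (m + 3) (by omega) (fun j hj => by simp [hj]) (by simp) ?_
  rintro ⟨h2, hhit, hall⟩
  exact hall 0 (by omega) (by rw [if_neg (by omega)])

lemma phi_Q (m : ℕ) :
    phi (fun j => if j = m + 2 then 1 else if j ≤ 2 * m + 2 then 0 else 1) = 2 := by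
  refine phi_1hit m (fun j hj => ?_) ?_ ?_ ?_
  · show (if j = m + 2 then (1 : Fin 3) else if j ≤ 2 * m + 2 then 0 else 1) = 0
    rw [if_neg (by omega), if_pos (by omega)]
  · show (if m + 2 = m + 2 then (1 : Fin 3) else if m + 2 ≤ 2 * m + 2 then 0 else 1) = 1
    rw [if_pos rfl]
  · show (if m + 3 + m = m + 2 then (1 : Fin 3) else if m + 3 + m ≤ 2 * m + 2 then 0 else 1) = 1
    rw [if_neg (by omega), if_neg (by omega)]
  · intro l hl
    show (if m + 3 + l = m + 2 then (1 : Fin 3) else if m + 3 + l ≤ 2 * m + 2 then 0 else 1) ≠ 1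
    rw [if_neg (by omega), if_pos (by omega)]
    decide


/-- Let `X = {0,1,2}^ℕ` and let `Y` be the set of points with
infinitely many nonzero coordinates. There is a shift-commuting homeomorphism
`g : Y → Y` that admits no continuous extension `Y ∪ {p} → X` for any `p ∈ X \ Y`. -/
theorem statement15 (Y : Set (ℕ → Fin 3))
    (hY : Y = {x : ℕ → Fin 3 | {i : ℕ | x i ≠ 0}.Infinite}) :
    ∃ g : Y ≃ₜ Y,
      (∀ (x : ℕ → Fin 3) (hx : x ∈ Y) (hx' : oshift x ∈ Y),
        (g ⟨oshift x, hx'⟩ : ℕ → Fin 3) = oshift (g ⟨x, hx⟩ : ℕ → Fin 3)) ∧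
      (∀ p : ℕ → Fin 3, p ∉ Y →
        ¬ ∃ h : ↥(insert p Y) → (ℕ → Fin 3), Continuous h ∧
          ∀ (x : ℕ → Fin 3) (hx : x ∈ Y),
            h ⟨x, Set.mem_insert_of_mem p hx⟩ = (g ⟨x, hx⟩ : ℕ → Fin 3)) := by
  subst hY
  refine ⟨Homeomorph.mk
    ⟨fun a => ⟨gg a, gg_inf a.2⟩, fun a => ⟨gg a, gg_inf a.2⟩,
      fun a => Subtype.ext (gg_gg (hz_of_inf a.2)),
      fun a => Subtype.ext (gg_gg (hz_of_inf a.2))⟩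
    ((continuous_pi gg_coord_cont).subtype_mk _)
    ((continuous_pi gg_coord_cont).subtype_mk _), ?_, ?_⟩
  · intro x hx hx'
    show gg (oshift x) = oshift (gg x)
    funext i
    show phi (drp (oshift x) i) = phi (drp x (i + 1))
    congr 1
    funext j
    show x (i + j + 1) = x (i + 1 + j)
    congr 1
    omega
  · rintro p hp ⟨h, hcont, hagree⟩
    have hfin : {i | p i ≠ 0}.Finite := Set.not_infinite.mp hp
    obtain ⟨M, hM⟩ := hfin.bddAbove
    set N := M + 1 with hNdef
    have hp0 : ∀ j, N ≤ j → p j = 0 := by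
      intro j hj
      by_contra hne
      exact absurd (hM hne) (by omega)
    have hpmem : p ∈ insert p {x : ℕ → Fin 3 | {i | x i ≠ 0}.Infinite} := Set.mem_insert _ _
    set xP : ℕ → ℕ → Fin 3 :=
      fun m j => if j < N then p j else if j < N + m + 3 then 0 else 1 with hxP
    set xQ : ℕ → ℕ → Fin 3 := fun m j => if j < N then p j else
      (if j = N + m + 2 then 1 else if j ≤ N + 2 * m + 2 then 0 else 1) with hxQ
    have hPmem : ∀ m, xP m ∈ {x : ℕ → Fin 3 | {i | x i ≠ 0}.Infinite} := by
      intro m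
      refine Set.infinite_of_forall_exists_gt fun a => ⟨a + N + m + 4, ?_, by omega⟩
      show xP m (a + N + m + 4) ≠ 0
      simp only [hxP]
      rw [if_neg (by omega), if_neg (by omega)]
      decide
    have hQmem : ∀ m, xQ m ∈ {x : ℕ → Fin 3 | {i | x i ≠ 0}.Infinite} := by
      intro m
      refine Set.infinite_of_forall_exists_gt fun a => ⟨a + N + 2 * m + 3, ?_, by omega⟩
      show xQ m (a + N + 2 * m + 3) ≠ 0
      simp only [hxQ]
      rw [if_neg (by omega), if_neg (by omega), if_neg (by omega)]
      decide
    have hPt : Filter.Tendsto (fun m => (⟨xP m, Set.mem_insert_of_mem p (hPmem m)⟩ :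
        ↥(insert p {x : ℕ → Fin 3 | {i | x i ≠ 0}.Infinite})))
        Filter.atTop (𝓝 ⟨p, hpmem⟩) := by
      rw [tendsto_subtype_rng, tendsto_pi_nhds]
      intro j
      refine Filter.Tendsto.congr' ?_ (tendsto_const_nhds (x := p j))
      filter_upwards [Filter.eventually_ge_atTop j] with m hm
      show p j = xP m j
      by_cases hN : j < N
      · simp only [hxP]; rw [if_pos hN]
      · simp only [hxP]; rw [if_neg hN, if_pos (by omega), hp0 j (by omega)]
    have hQt : Filter.Tendsto (fun m => (⟨xQ m, Set.mem_insert_of_mem p (hQmem m)⟩ :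
        ↥(insert p {x : ℕ → Fin 3 | {i | x i ≠ 0}.Infinite})))
        Filter.atTop (𝓝 ⟨p, hpmem⟩) := by
      rw [tendsto_subtype_rng, tendsto_pi_nhds]
      intro j
      refine Filter.Tendsto.congr' ?_ (tendsto_const_nhds (x := p j))
      filter_upwards [Filter.eventually_ge_atTop j] with m hm
      show p j = xQ m j
      by_cases hN : j < N
      · simp only [hxQ]; rw [if_pos hN]
      · simp only [hxQ]
        rw [if_neg hN, if_neg (by omega), if_pos (by omega), hp0 j (by omega)]
    have hvalP : ∀ m, h ⟨xP m, Set.mem_insert_of_mem p (hPmem m)⟩ N = 0 := by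
      intro m
      rw [hagree (xP m) (hPmem m)]
      show gg (xP m) N = 0
      rw [gg_apply]
      have hdp : drp (xP m) N = (fun j => if j < m + 3 then (0 : Fin 3) else 1) := by
        funext j
        simp only [drp_apply, hxP]
        rw [if_neg (by omega)]
        by_cases hj : j < m + 3
        · rw [if_pos (by omega), if_pos hj]
        · rw [if_neg (by omega), if_neg hj]
      rw [hdp, phi_P]
    have hvalQ : ∀ m, h ⟨xQ m, Set.mem_insert_of_mem p (hQmem m)⟩ N = 2 := by
      intro m
      rw [hagree (xQ m) (hQmem m)]
      show gg (xQ m) N = 2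
      rw [gg_apply]
      have hdp : drp (xQ m) N =
          (fun j => if j = m + 2 then (1 : Fin 3) else if j ≤ 2 * m + 2 then 0 else 1) := by
        funext j
        simp only [drp_apply, hxQ]
        rw [if_neg (by omega)]
        split_ifs <;> first | rfl | omega
      rw [hdp, phi_Q]
    have hHP := (hcont.tendsto ⟨p, hpmem⟩).comp hPt
    have hHQ := (hcont.tendsto ⟨p, hpmem⟩).comp hQt
    have hHPn := (tendsto_pi_nhds.mp hHP) N
    have hHQn := (tendsto_pi_nhds.mp hHQ) N
    have h0 : h ⟨p, hpmem⟩ N = 0 :=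
      tendsto_nhds_unique (hHPn.congr (fun m => hvalP m)) tendsto_const_nhds
    have h2 : h ⟨p, hpmem⟩ N = 2 :=
      tendsto_nhds_unique (hHQn.congr (fun m => hvalQ m)) tendsto_const_nhds
    rw [h0] at h2
    exact absurd h2 (by decide)
end
end

section
/- Let X = {0,1,2}^ℤ and let Y = X \ {x ∈ X : there is exactly one n ∈ ℤ with x_n ≠ 0}, with the subspace topology (so only two σ-orbits are removed from X). Then there exists a homeomorphism g : Y → Y satisfying g(σ(x)) = σ(g(x)) for all x ∈ Y, such that for every point p ∈ X \ Y there is no continuous map from Y ∪ {p} (with the subspace topology from X) to X extending g. -/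
open Set Topology Filter

/-- Swap the symbols 1 and 2, fix 0. -/
def flip3 : Fin 3 → Fin 3 := ![0, 2, 1]

lemma flip3_flip3 (a : Fin 3) : flip3 (flip3 a) = a := by fin_cases a <;> rfl

lemma flip3_eq_zero (a : Fin 3) : flip3 a = 0 ↔ a = 0 := by fin_cases a <;> simp [flip3]

lemma flip3_ne (a : Fin 3) (h : a ≠ 0) : flip3 a ≠ a := by
  fin_cases a <;> simp_all [flip3]

/-- The "nearest other nonzero coordinate is strictly to the right" condition. -/
def Cnd (x : ℤ → Fin 3) (n : ℤ) : Prop :=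
  x n ≠ 0 ∧ ∃ d : ℕ, 0 < d ∧ x (n + d) ≠ 0 ∧ ∀ e : ℕ, 0 < e → e ≤ d → x (n - e) = 0

open Classical in
/-- The map: flip the symbol at positions where `Cnd` holds. -/
noncomputable def Gm (x : ℤ → Fin 3) : ℤ → Fin 3 := fun n =>
  if Cnd x n then flip3 (x n) else x n

open Classical in
lemma Gm_apply (x : ℤ → Fin 3) (n : ℤ) :
    Gm x n = if Cnd x n then flip3 (x n) else x n := rfl

lemma Cnd_pattern {x y : ℤ → Fin 3} (h : ∀ m, x m = 0 ↔ y m = 0) (n : ℤ) :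
    Cnd x n ↔ Cnd y n := by
  unfold Cnd
  constructor
  · rintro ⟨h1, d, hd, h2, h3⟩
    exact ⟨fun hz => h1 ((h n).mpr hz), d, hd, fun hz => h2 ((h _).mpr hz),
      fun e he hed => (h _).mp (h3 e he hed)⟩
  · rintro ⟨h1, d, hd, h2, h3⟩
    exact ⟨fun hz => h1 ((h n).mp hz), d, hd, fun hz => h2 ((h _).mp hz),
      fun e he hed => (h _).mpr (h3 e he hed)⟩

lemma Gm_zero_iff (x : ℤ → Fin 3) (n : ℤ) : Gm x n = 0 ↔ x n = 0 := by
  rw [Gm_apply]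
  split
  · exact flip3_eq_zero _
  · exact Iff.rfl

lemma Gm_Gm (x : ℤ → Fin 3) : Gm (Gm x) = x := by
  funext n
  have hC : Cnd (Gm x) n ↔ Cnd x n := Cnd_pattern (fun m => Gm_zero_iff x m) n
  rw [Gm_apply, Gm_apply]
  by_cases h : Cnd x n
  · rw [if_pos (hC.mpr h), if_pos h, flip3_flip3]
  · rw [if_neg (fun hc => h (hC.mp hc)), if_neg h]

lemma Cnd_tshift (x : ℤ → Fin 3) (n : ℤ) : Cnd (tshift x) n ↔ Cnd x (n + 1) := by
  unfold Cnd tshift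
  constructor
  · rintro ⟨h1, d, hd, h2, h3⟩
    refine ⟨h1, d, hd, by rwa [show n + 1 + (d : ℤ) = n + (d : ℤ) + 1 by ring],
      fun e he hed => by
        rw [show n + 1 - (e : ℤ) = n - (e : ℤ) + 1 by ring]; exact h3 e he hed⟩
  · rintro ⟨h1, d, hd, h2, h3⟩
    refine ⟨h1, d, hd, by rwa [show n + (d : ℤ) + 1 = n + 1 + (d : ℤ) by ring],
      fun e he hed => by
        rw [show n - (e : ℤ) + 1 = n + 1 - (e : ℤ) by ring]; exact h3 e he hed⟩

lemma Gm_tshift (x : ℤ → Fin 3) : Gm (tshift x) = tshift (Gm x) := by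
  funext n
  show Gm (tshift x) n = Gm x (n + 1)
  rw [Gm_apply, Gm_apply]
  by_cases h : Cnd x (n + 1)
  · rw [if_pos ((Cnd_tshift x n).mpr h), if_pos h]; rfl
  · rw [if_neg (fun hc => h ((Cnd_tshift x n).mp hc)), if_neg h]; rfl

lemma Cnd_local {x y : ℤ → Fin 3} {n : ℤ} {d : ℕ}
    (hagree : ∀ k : ℤ, n - d ≤ k → k ≤ n + d → y k = x k)
    (m : ℤ) (hmn : m ≠ n) (hm1 : n - d ≤ m) (hm2 : m ≤ n + d) (hxm : x m ≠ 0) :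
    Cnd x n → Cnd y n := by
  rintro ⟨h1, d', hd', h2, h3⟩
  have hyn : y n = x n := hagree n (by omega) (by omega)
  rcases lt_or_gt_of_ne hmn with hlt | hgt
  · -- m < n
    have hdd : (d' : ℤ) < n - m := by
      by_contra hc
      push_neg at hc
      have h4 := h3 (n - m).toNat (by omega) (by omega)
      rw [show n - ((n - m).toNat : ℤ) = m by omega] at h4
      exact hxm h4
    refine ⟨by rw [hyn]; exact h1, d', hd', ?_, fun e he hed => ?_⟩
    · rw [hagree _ (by omega) (by omega)]; exact h2
    · rw [hagree _ (by omega) (by omega)]; exact h3 e he hed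
  · -- m > n
    by_cases hcase : (d' : ℤ) ≤ m - n
    · refine ⟨by rw [hyn]; exact h1, d', hd', ?_, fun e he hed => ?_⟩
      · rw [hagree _ (by omega) (by omega)]; exact h2
      · rw [hagree _ (by omega) (by omega)]; exact h3 e he hed
    · push_neg at hcase
      refine ⟨by rw [hyn]; exact h1, (m - n).toNat, by omega, ?_, fun e he hed => ?_⟩
      · rw [hagree _ (by omega) (by omega), show n + (((m - n).toNat : ℤ)) = m by omega]
        exact hxm
      · rw [hagree _ (by omega) (by omega)]; exact h3 e he (by omega)

lemma Gm_eq_local {x y : ℤ → Fin 3} {n : ℤ} {d : ℕ}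
    (hagree : ∀ k : ℤ, n - d ≤ k → k ≤ n + d → y k = x k)
    (m : ℤ) (hmn : m ≠ n) (hm1 : n - d ≤ m) (hm2 : m ≤ n + d) (hxm : x m ≠ 0) :
    Gm y n = Gm x n := by
  have hyn : y n = x n := hagree n (by omega) (by omega)
  have hym : y m ≠ 0 := by rw [hagree m hm1 hm2]; exact hxm
  have hiff : Cnd x n ↔ Cnd y n :=
    ⟨Cnd_local hagree m hmn hm1 hm2 hxm,
     Cnd_local (fun k hk1 hk2 => (hagree k hk1 hk2).symm) m hmn hm1 hm2 hym⟩
  rw [Gm_apply, Gm_apply]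
  by_cases h : Cnd x n
  · rw [if_pos h, if_pos (hiff.mp h), hyn]
  · rw [if_neg h, if_neg (fun hc => h (hiff.mpr hc)), hyn]

lemma Gm_memY {x : ℤ → Fin 3} (hx : ¬ ∃! n : ℤ, x n ≠ 0) : ¬ ∃! n : ℤ, Gm x n ≠ 0 := by
  intro hc
  apply hx
  obtain ⟨n, hn, hu⟩ := hc
  refine ⟨n, fun hz => hn (by rw [Gm_zero_iff]; exact hz), fun m hm => ?_⟩
  exact hu m (fun hz => hm ((Gm_zero_iff x m).mp hz))

lemma Gm_cont :
    Continuous (fun y : {x : ℤ → Fin 3 | ¬ ∃! n : ℤ, x n ≠ 0} => Gm (y : ℤ → Fin 3)) := by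
  refine continuous_pi fun n => ?_
  rw [continuous_iff_continuousAt]
  intro x
  by_cases hxn : (x : ℤ → Fin 3) n = 0
  · -- locally zero
    have hU : {y : ℤ → Fin 3 | y n = 0} ∈ 𝓝 (x : ℤ → Fin 3) := by
      refine IsOpen.mem_nhds ?_ hxn
      exact (continuous_apply n).isOpen_preimage {0} (isOpen_discrete _)
    have hU' : Subtype.val ⁻¹' {y : ℤ → Fin 3 | y n = 0} ∈ 𝓝 x :=
      continuous_subtype_val.continuousAt hU
    refine Filter.EventuallyEq.continuousAt (y := (0 : Fin 3)) ?_
    filter_upwards [hU'] with y hy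
    show Gm (y : ℤ → Fin 3) n = 0
    rw [Gm_zero_iff]; exact hy
  · -- there is another nonzero coordinate
    have hm : ∃ m : ℤ, (x : ℤ → Fin 3) m ≠ 0 ∧ m ≠ n := by
      by_contra hc
      push_neg at hc
      exact x.2 ⟨n, hxn, fun m hm => hc m hm⟩
    obtain ⟨m, hxm, hmn⟩ := hm
    set d : ℕ := (m - n).natAbs with hd
    have hS : {y : ℤ → Fin 3 | ∀ k ∈ Finset.Icc (n - (d : ℤ)) (n + (d : ℤ)),
        y k = (x : ℤ → Fin 3) k} ∈ 𝓝 (x : ℤ → Fin 3) := by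
      have heq : {y : ℤ → Fin 3 | ∀ k ∈ Finset.Icc (n - (d : ℤ)) (n + (d : ℤ)),
          y k = (x : ℤ → Fin 3) k}
          = ⋂ k ∈ Finset.Icc (n - (d : ℤ)) (n + (d : ℤ)),
            (fun y : ℤ → Fin 3 => y k) ⁻¹' {(x : ℤ → Fin 3) k} := by
        ext y; simp
      rw [heq, Filter.biInter_finset_mem]
      intro k _
      exact IsOpen.mem_nhds
        ((continuous_apply k).isOpen_preimage _ (isOpen_discrete _)) rfl
    have hS' : Subtype.val ⁻¹' {y : ℤ → Fin 3 | ∀ k ∈ Finset.Icc (n - (d : ℤ)) (n + (d : ℤ)),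
        y k = (x : ℤ → Fin 3) k} ∈ 𝓝 x := continuous_subtype_val.continuousAt hS
    refine Filter.EventuallyEq.continuousAt (y := Gm (x : ℤ → Fin 3) n) ?_
    filter_upwards [hS'] with y hy
    refine Gm_eq_local (fun k hk1 hk2 => hy k (Finset.mem_Icc.mpr ⟨hk1, hk2⟩))
      m hmn (by omega) (by omega) hxm

/-- Let `X = {0,1,2}^ℤ` and let `Y` be `X` minus the points having
exactly one nonzero coordinate (two shift-orbits). There is a shift-commuting
homeomorphism `g : Y → Y` that admits no continuous extension `Y ∪ {p} → X` for any
`p ∈ X \ Y`. -/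
theorem statement16 (Y : Set (ℤ → Fin 3))
    (hY : Y = {x : ℤ → Fin 3 | ¬ ∃! n : ℤ, x n ≠ 0}) :
    ∃ g : Y ≃ₜ Y,
      (∀ (x : ℤ → Fin 3) (hx : x ∈ Y) (hx' : tshift x ∈ Y),
        (g ⟨tshift x, hx'⟩ : ℤ → Fin 3) = tshift (g ⟨x, hx⟩ : ℤ → Fin 3)) ∧
      (∀ p : ℤ → Fin 3, p ∉ Y →
        ¬ ∃ h : ↥(insert p Y) → (ℤ → Fin 3), Continuous h ∧
          ∀ (x : ℤ → Fin 3) (hx : x ∈ Y),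
            h ⟨x, Set.mem_insert_of_mem p hx⟩ = (g ⟨x, hx⟩ : ℤ → Fin 3)) := by
  subst hY
  refine ⟨{ toFun := fun y => ⟨Gm y, Gm_memY y.2⟩
            invFun := fun y => ⟨Gm y, Gm_memY y.2⟩
            left_inv := fun y => Subtype.ext (Gm_Gm y)
            right_inv := fun y => Subtype.ext (Gm_Gm y)
            continuous_toFun := Gm_cont.subtype_mk _
            continuous_invFun := Gm_cont.subtype_mk _ }, ?_, ?_⟩
  · intro x hx hx'
    exact Gm_tshift x
  · intro p hp
    have hpE : ∃! n : ℤ, p n ≠ 0 := not_not.mp hp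
    obtain ⟨n₀, hn₀, huniq⟩ := hpE
    rintro ⟨h, hcont, hext⟩
    -- the two approximating sequences
    set xk : ℕ → (ℤ → Fin 3) := fun k => Function.update p (n₀ + k + 1) 1 with hxkdef
    set yk : ℕ → (ℤ → Fin 3) := fun k => Function.update p (n₀ - k - 1) 1 with hykdef
    have hxkY : ∀ k, xk k ∈ {x : ℤ → Fin 3 | ¬ ∃! n : ℤ, x n ≠ 0} := by
      intro k
      rintro ⟨n, hn, hu⟩
      have h1 : xk k n₀ ≠ 0 := by
        rw [hxkdef]
        simp only
        rw [Function.update_of_ne (by omega)]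
        exact hn₀
      have h2 : xk k (n₀ + k + 1) ≠ 0 := by
        rw [hxkdef]
        simp only
        rw [Function.update_self]
        decide
      have e1 := hu _ h1
      have e2 := hu _ h2
      omega
    have hykY : ∀ k, yk k ∈ {x : ℤ → Fin 3 | ¬ ∃! n : ℤ, x n ≠ 0} := by
      intro k
      rintro ⟨n, hn, hu⟩
      have h1 : yk k n₀ ≠ 0 := by
        rw [hykdef]
        simp only
        rw [Function.update_of_ne (by omega)]
        exact hn₀
      have h2 : yk k (n₀ - k - 1) ≠ 0 := by
        rw [hykdef]
        simp only
        rw [Function.update_self]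
        decide
      have e1 := hu _ h1
      have e2 := hu _ h2
      omega
    have hxt : Filter.Tendsto xk Filter.atTop (𝓝 p) := by
      rw [tendsto_pi_nhds]
      intro m
      refine Filter.Tendsto.congr' ?_ (tendsto_const_nhds (x := p m))
      filter_upwards [Filter.eventually_ge_atTop ((m - n₀).natAbs)] with k hk
      rw [hxkdef]
      simp only
      rw [Function.update_of_ne (by omega)]
    have hyt : Filter.Tendsto yk Filter.atTop (𝓝 p) := by
      rw [tendsto_pi_nhds]
      intro m
      refine Filter.Tendsto.congr' ?_ (tendsto_const_nhds (x := p m))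
      filter_upwards [Filter.eventually_ge_atTop ((m - n₀).natAbs)] with k hk
      rw [hykdef]
      simp only
      rw [Function.update_of_ne (by omega)]
    have hGxk : ∀ k, Gm (xk k) n₀ = flip3 (p n₀) := by
      intro k
      have hC : Cnd (xk k) n₀ := by
        refine ⟨?_, k + 1, Nat.succ_pos _, ?_, ?_⟩
        · rw [hxkdef]; simp only; rw [Function.update_of_ne (by omega)]; exact hn₀
        · rw [hxkdef]; simp only
          rw [show n₀ + ((k + 1 : ℕ) : ℤ) = n₀ + k + 1 by push_cast; ring,
            Function.update_self]
          decide
        · intro e he hed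
          rw [hxkdef]; simp only
          rw [Function.update_of_ne (by omega)]
          by_contra hne
          have := huniq _ hne
          omega
      rw [Gm_apply, if_pos hC, hxkdef]
      simp only
      rw [Function.update_of_ne (by omega)]
    have hGyk : ∀ k, Gm (yk k) n₀ = p n₀ := by
      intro k
      have hC : ¬ Cnd (yk k) n₀ := by
        rintro ⟨-, d, hd, h2, -⟩
        apply h2
        rw [hykdef]
        simp only
        rw [Function.update_of_ne (by omega)]
        by_contra hne
        have := huniq _ hne
        omega
      rw [Gm_apply, if_neg hC, hykdef]
      simp only
      rw [Function.update_of_ne (by omega)]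
    have hxt' : Filter.Tendsto
        (fun k => (⟨xk k, Set.mem_insert_of_mem p (hxkY k)⟩ : ↥(insert p {x : ℤ → Fin 3 | ¬ ∃! n : ℤ, x n ≠ 0})))
        Filter.atTop (𝓝 ⟨p, Set.mem_insert p {x : ℤ → Fin 3 | ¬ ∃! n : ℤ, x n ≠ 0}⟩) := by
      rw [tendsto_subtype_rng]
      exact hxt
    have hyt' : Filter.Tendsto
        (fun k => (⟨yk k, Set.mem_insert_of_mem p (hykY k)⟩ : ↥(insert p {x : ℤ → Fin 3 | ¬ ∃! n : ℤ, x n ≠ 0})))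
        Filter.atTop (𝓝 ⟨p, Set.mem_insert p {x : ℤ → Fin 3 | ¬ ∃! n : ℤ, x n ≠ 0}⟩) := by
      rw [tendsto_subtype_rng]
      exact hyt
    have key1 : h ⟨p, Set.mem_insert p {x : ℤ → Fin 3 | ¬ ∃! n : ℤ, x n ≠ 0}⟩ n₀ = flip3 (p n₀) := by
      have h1 : Filter.Tendsto (fun k => h ⟨xk k, Set.mem_insert_of_mem p (hxkY k)⟩ n₀)
          Filter.atTop (𝓝 (h ⟨p, Set.mem_insert p {x : ℤ → Fin 3 | ¬ ∃! n : ℤ, x n ≠ 0}⟩ n₀)) :=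
        ((continuous_apply n₀).continuousAt.tendsto).comp
          ((hcont.continuousAt.tendsto).comp hxt')
      have h1' : Filter.Tendsto (fun _ : ℕ => flip3 (p n₀))
          Filter.atTop (𝓝 (h ⟨p, Set.mem_insert p {x : ℤ → Fin 3 | ¬ ∃! n : ℤ, x n ≠ 0}⟩ n₀)) := by
        refine h1.congr fun k => ?_
        rw [hext (xk k) (hxkY k)]
        exact hGxk k
      exact (tendsto_nhds_unique h1' tendsto_const_nhds)
    have key2 : h ⟨p, Set.mem_insert p {x : ℤ → Fin 3 | ¬ ∃! n : ℤ, x n ≠ 0}⟩ n₀ = p n₀ := by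
      have h1 : Filter.Tendsto (fun k => h ⟨yk k, Set.mem_insert_of_mem p (hykY k)⟩ n₀)
          Filter.atTop (𝓝 (h ⟨p, Set.mem_insert p {x : ℤ → Fin 3 | ¬ ∃! n : ℤ, x n ≠ 0}⟩ n₀)) :=
        ((continuous_apply n₀).continuousAt.tendsto).comp
          ((hcont.continuousAt.tendsto).comp hyt')
      have h1' : Filter.Tendsto (fun _ : ℕ => p n₀)
          Filter.atTop (𝓝 (h ⟨p, Set.mem_insert p {x : ℤ → Fin 3 | ¬ ∃! n : ℤ, x n ≠ 0}⟩ n₀)) := by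
        refine h1.congr fun k => ?_
        rw [hext (yk k) (hykY k)]
        exact hGyk k
      exact (tendsto_nhds_unique h1' tendsto_const_nhds)
    exact flip3_ne (p n₀) hn₀ (key1 ▸ key2 ▸ rfl)
end
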